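/- arXiv:0805.3087 — 10 statements merged into one kernel-verified Lean document; each statement's English description precedes it below -/
import Mathlib

section
/- If p₁ > 0 and p₂ > 0, then the two-player game with strategy sets S₁, S₂ and payoffs P₁, P₂ has at least one Nash equilibrium, i.e. there exist (α₀, β₀) ∈ S₁ and (γ₀, δ₀) ∈ S₂ such that P₁(α₀, β₀, γ₀, δ₀) ≥ P₁(α, β, γ₀, δ₀) for all (α, β) ∈ S₁ and P₂(α₀, β₀, γ₀, δ₀) ≥ P₂(α₀, β₀, γ, δ) for all (γ, δ) ∈ S₂. -/
open Filter

noncomputable section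

/-- Consumer I's strategy set. -/
def S1 (Y1 p1 p2 ρ a b : ℝ) : Prop :=
  0 ≤ a ∧ 0 ≤ b ∧ a * p1 + b * (p2 + ρ) ≤ Y1

/-- Consumer II's strategy set. -/
def S2 (Y2 p1 p2 ρ c d : ℝ) : Prop :=
  0 ≤ c ∧ 0 ≤ d ∧ c * (p1 + ρ) + d * p2 ≤ Y2

/-- Consumer I's payoff. -/
def P1 (q1 q2 a b c d : ℝ) : ℝ := min a q1 + min b (max 0 (q2 - d))

/-- Consumer II's payoff. -/
def P2 (q1 q2 a b c d : ℝ) : ℝ := min d q2 + min c (max 0 (q1 - a))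

/-- Nash equilibrium of the one-period game. -/
def NashEq (Y1 Y2 q1 q2 p1 p2 ρ a0 b0 c0 d0 : ℝ) : Prop :=
  S1 Y1 p1 p2 ρ a0 b0 ∧ S2 Y2 p1 p2 ρ c0 d0 ∧
  (∀ a b, S1 Y1 p1 p2 ρ a b → P1 q1 q2 a b c0 d0 ≤ P1 q1 q2 a0 b0 c0 d0) ∧
  (∀ c d, S2 Y2 p1 p2 ρ c d → P2 q1 q2 a0 b0 c d ≤ P2 q1 q2 a0 b0 c0 d0)

/-- Expenditure-minimal Nash equilibrium (selection rule SR1). -/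
def ExpMinNE (Y1 Y2 q1 q2 p1 p2 ρ a0 b0 c0 d0 : ℝ) : Prop :=
  NashEq Y1 Y2 q1 q2 p1 p2 ρ a0 b0 c0 d0 ∧
  (∀ a b, S1 Y1 p1 p2 ρ a b → P1 q1 q2 a b c0 d0 = P1 q1 q2 a0 b0 c0 d0 →
    a0 * p1 + b0 * (p2 + ρ) ≤ a * p1 + b * (p2 + ρ)) ∧
  (∀ c d, S2 Y2 p1 p2 ρ c d → P2 q1 q2 a0 b0 c d = P2 q1 q2 a0 b0 c0 d0 →
    c0 * (p1 + ρ) + d0 * p2 ≤ c * (p1 + ρ) + d * p2)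


/-! Each consumer's best response is the greedy purchase: the good that is cheaper for him first, up
to what is still available, then the other one. Consumer II's own good 2 is always fully available
to him, so when it is also the cheaper one for him (`p₂ ≤ p₁ + ρ`) his purchase
`δ₀ = min q₂ (Y₂ / p₂)` does not depend on consumer I. Let consumer I best-respond to `δ₀`, and
consumer II respond greedily to that: his greedy purchase again starts with `δ₀`. Otherwise
`p₁ ≤ p₂ + ρ`, and the same construction works with the consumers exchanged. -/

def InBudget (P Q Y a b : ℝ) : Prop :=
  0 ≤ a ∧ 0 ≤ b ∧ a * P + b * Q ≤ Y

def IsCappedOptimum (P Q Y k₁ k₂ x y : ℝ) : Prop :=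
  InBudget P Q Y x y ∧
    ∀ a b, InBudget P Q Y a b → min a k₁ + min b k₂ ≤ min x k₁ + min y k₂

section CappedOptimum

variable {P Q Y k₁ k₂ x y : ℝ}

theorem IsCappedOptimum.swap (h : IsCappedOptimum P Q Y k₁ k₂ x y) :
    IsCappedOptimum Q P Y k₂ k₁ y x := by
  obtain ⟨⟨hx, hy, hxy⟩, hopt⟩ := h
  refine ⟨⟨hy, hx, by linarith⟩, fun b a ⟨hb, ha, hba⟩ => ?_⟩
  linarith [hopt a b ⟨ha, hb, by linarith⟩]

theorem isCappedOptimum_greedy (hP : 0 < P) (hPQ : P ≤ Q) (hY : 0 ≤ Y) (hk₁ : 0 ≤ k₁)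
    (hk₂ : 0 ≤ k₂) :
    IsCappedOptimum P Q Y k₁ k₂ (min k₁ (Y / P)) (min k₂ ((Y - min k₁ (Y / P) * P) / Q)) := by
  have hQ : 0 < Q := hP.trans_le hPQ
  set x := min k₁ (Y / P)
  set y := min k₂ ((Y - x * P) / Q)
  have hxP : x * P ≤ Y := (le_div_iff₀ hP).1 (min_le_right _ _)
  have hyQ : y * Q ≤ Y - x * P := (le_div_iff₀ hQ).1 (min_le_right _ _)
  refine ⟨⟨le_min hk₁ (div_nonneg hY hP.le),
    le_min hk₂ (div_nonneg (sub_nonneg.2 hxP) hQ.le), by linarith⟩, ?_⟩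
  rintro a b ⟨-, hb, hab⟩
  rw [min_eq_left (min_le_left _ _ : x ≤ k₁), min_eq_left (min_le_left _ _ : y ≤ k₂)]
  set u := min a k₁
  set v := min b k₂
  have huP : u * P ≤ a * P := mul_le_mul_of_nonneg_right (min_le_left _ _) hP.le
  have hvQ : v * Q ≤ b * Q := mul_le_mul_of_nonneg_right (min_le_left _ _) hQ.le
  have hux : u ≤ x := le_min (min_le_right _ _) ((le_div_iff₀ hP).2 (by linarith [mul_nonneg hb hQ.le]))
  rcases min_choice k₂ ((Y - x * P) / Q) with hy | hy
  · linarith [min_le_right b k₂]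
  · -- `(x, y)` exhausts the budget, and each unit of the first good bought instead of the
    -- second saves `Q - P`
    have hyQ' : y * Q = Y - x * P := by
      rw [show y = (Y - x * P) / Q from hy]
      field_simp
    refine le_of_mul_le_mul_right ?_ hQ
    linarith [mul_le_mul_of_nonneg_right hux (sub_nonneg.2 hPQ)]

theorem exists_isCappedOptimum (hP : 0 < P) (hQ : 0 < Q) (hY : 0 ≤ Y) (hk₁ : 0 ≤ k₁)
    (hk₂ : 0 ≤ k₂) : ∃ x y, IsCappedOptimum P Q Y k₁ k₂ x y := by
  rcases le_total P Q with hPQ | hQP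
  · exact ⟨_, _, isCappedOptimum_greedy hP hPQ hY hk₁ hk₂⟩
  · exact ⟨_, _, (isCappedOptimum_greedy hQ hQP hY hk₂ hk₁).swap⟩

end CappedOptimum

section NashEq

variable {Y1 Y2 q1 q2 p1 p2 ρ a b c d : ℝ}

theorem s2_iff_inBudget : S2 Y2 p1 p2 ρ c d ↔ InBudget p2 (p1 + ρ) Y2 d c := by
  unfold S2 InBudget
  constructor <;> rintro ⟨h₁, h₂, h₃⟩ <;> exact ⟨h₂, h₁, by linarith⟩

theorem nashEq_iff_isCappedOptimum : NashEq Y1 Y2 q1 q2 p1 p2 ρ a b c d ↔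
    IsCappedOptimum p1 (p2 + ρ) Y1 q1 (max 0 (q2 - d)) a b ∧
      IsCappedOptimum p2 (p1 + ρ) Y2 q2 (max 0 (q1 - a)) d c := by
  simp only [NashEq, IsCappedOptimum, P1, P2, s2_iff_inBudget]
  exact ⟨fun ⟨h₁, h₂, h₃, h₄⟩ => ⟨⟨h₁, h₃⟩, h₂, fun d' c' h => h₄ c' d' h⟩,
    fun ⟨⟨h₁, h₃⟩, h₂, h₄⟩ => ⟨h₁, h₂, h₃, fun c' d' h => h₄ d' c' h⟩⟩

theorem nashEq_swap_iff :
    NashEq Y2 Y1 q2 q1 p2 p1 ρ d c b a ↔ NashEq Y1 Y2 q1 q2 p1 p2 ρ a b c d := by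
  rw [nashEq_iff_isCappedOptimum, nashEq_iff_isCappedOptimum, and_comm]

theorem exists_nashEq_of_le (hY1 : 0 ≤ Y1) (hY2 : 0 ≤ Y2) (hq1 : 0 ≤ q1) (hq2 : 0 ≤ q2)
    (hρ : 0 ≤ ρ) (hp1 : 0 < p1) (hp2 : 0 < p2) (h : p2 ≤ p1 + ρ) :
    ∃ a0 b0 c0 d0 : ℝ, NashEq Y1 Y2 q1 q2 p1 p2 ρ a0 b0 c0 d0 := by
  obtain ⟨a0, b0, hI⟩ := exists_isCappedOptimum (Q := p2 + ρ) (k₂ := max 0 (q2 - min q2 (Y2 / p2))) hp1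
    (by linarith) hY1 hq1 (le_max_left _ _)
  have hII := isCappedOptimum_greedy (k₂ := max 0 (q1 - a0)) hp2 h hY2 hq2 (le_max_left _ _)
  exact ⟨a0, b0, _, _, nashEq_iff_isCappedOptimum.2 ⟨hI, hII⟩⟩

end NashEq

/-- Existence of a Nash equilibrium when both prices are positive. -/
theorem exists_nashEq (Y1 Y2 q1 q2 ρ p1 p2 : ℝ)
    (hY1 : 0 < Y1) (hY2 : 0 < Y2) (hq1 : 0 < q1) (hq2 : 0 < q2) (hρ : 0 < ρ)
    (hp1 : 0 < p1) (hp2 : 0 < p2) :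
    ∃ a0 b0 c0 d0 : ℝ, NashEq Y1 Y2 q1 q2 p1 p2 ρ a0 b0 c0 d0 := by
  rcases le_total p2 (p1 + ρ) with h | h
  · exact exists_nashEq_of_le hY1.le hY2.le hq1.le hq2.le hρ.le hp1 hp2 h
  · obtain ⟨d0, c0, b0, a0, hNE⟩ :=
      exists_nashEq_of_le hY2.le hY1.le hq2.le hq1.le hρ.le hp2 hp1 (by linarith)
    exact ⟨a0, b0, c0, d0, nashEq_swap_iff.1 hNE⟩
end
end

section
/- (Lemma 2.1) Assume p₁ > 0 and p₂ > 0, and let (α₀, β₀, γ₀, δ₀) be an expenditure-minimal Nash equilibrium. Then α₀ ≤ q₁, δ₀ ≤ q₂, and moreover α₀ + γ₀ ≤ q₁ and β₀ + δ₀ ≤ q₂. -/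
/-!
An expenditure-minimal equilibrium never buys more than it can use: capping a purchase at the
quantity that actually reaches the buyer leaves the payoff unchanged, keeps the bundle
affordable and, at positive prices, strictly lowers the expenditure whenever the cap binds.
-/

open Filter

noncomputable section

section

variable {Y1 Y2 q1 q2 p1 p2 ρ a b c d a0 b0 c0 d0 : ℝ}

theorem S1.mono (h : S1 Y1 p1 p2 ρ a0 b0) (hp1 : 0 ≤ p1) (hp2ρ : 0 ≤ p2 + ρ)
    (ha : 0 ≤ a) (hb : 0 ≤ b) (ha0 : a ≤ a0) (hb0 : b ≤ b0) : S1 Y1 p1 p2 ρ a b := by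
  obtain ⟨-, -, hbudget⟩ := h
  refine ⟨ha, hb, le_trans ?_ hbudget⟩
  gcongr

theorem S2.mono (h : S2 Y2 p1 p2 ρ c0 d0) (hp1ρ : 0 ≤ p1 + ρ) (hp2 : 0 ≤ p2)
    (hc : 0 ≤ c) (hd : 0 ≤ d) (hc0 : c ≤ c0) (hd0 : d ≤ d0) : S2 Y2 p1 p2 ρ c d := by
  obtain ⟨-, -, hbudget⟩ := h
  refine ⟨hc, hd, le_trans ?_ hbudget⟩
  gcongr

theorem P1_min_left (q1 q2 a b c d : ℝ) : P1 q1 q2 (min a q1) b c d = P1 q1 q2 a b c d := by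
  simp only [P1, min_assoc, min_self]

theorem P1_min_right (q1 q2 a b c d : ℝ) :
    P1 q1 q2 a (min b (max 0 (q2 - d))) c d = P1 q1 q2 a b c d := by
  simp only [P1, min_assoc, min_self]

theorem P2_min_right (q1 q2 a b c d : ℝ) : P2 q1 q2 a b c (min d q2) = P2 q1 q2 a b c d := by
  simp only [P2, min_assoc, min_self]

theorem P2_min_left (q1 q2 a b c d : ℝ) :
    P2 q1 q2 a b (min c (max 0 (q1 - a))) d = P2 q1 q2 a b c d := by
  simp only [P2, min_assoc, min_self]

namespace ExpMinNE

variable (hNE : ExpMinNE Y1 Y2 q1 q2 p1 p2 ρ a0 b0 c0 d0)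
include hNE

theorem eq_of_le_of_P1_eq (hp1 : 0 < p1) (hp2ρ : 0 < p2 + ρ) (ha : 0 ≤ a) (hb : 0 ≤ b)
    (ha0 : a ≤ a0) (hb0 : b ≤ b0) (hP : P1 q1 q2 a b c0 d0 = P1 q1 q2 a0 b0 c0 d0) :
    a = a0 ∧ b = b0 := by
  have hS : S1 Y1 p1 p2 ρ a b := hNE.1.1.mono hp1.le hp2ρ.le ha hb ha0 hb0
  have hcost := hNE.2.1 a b hS hP
  constructor <;> nlinarith

theorem eq_of_le_of_P2_eq (hp1ρ : 0 < p1 + ρ) (hp2 : 0 < p2) (hc : 0 ≤ c) (hd : 0 ≤ d)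
    (hc0 : c ≤ c0) (hd0 : d ≤ d0) (hP : P2 q1 q2 a0 b0 c d = P2 q1 q2 a0 b0 c0 d0) :
    c = c0 ∧ d = d0 := by
  have hS : S2 Y2 p1 p2 ρ c d := hNE.1.2.1.mono hp1ρ.le hp2.le hc hd hc0 hd0
  have hcost := hNE.2.2 c d hS hP
  constructor <;> nlinarith

theorem a0_le_q1 (hq1 : 0 ≤ q1) (hp1 : 0 < p1) (hp2ρ : 0 < p2 + ρ) : a0 ≤ q1 := by
  obtain ⟨ha0, hb0, -⟩ := hNE.1.1
  have h := (hNE.eq_of_le_of_P1_eq hp1 hp2ρ (le_min ha0 hq1) hb0 (min_le_left _ _) le_rfl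
    (P1_min_left ..)).1
  exact min_eq_left_iff.mp h

theorem b0_le_max (hp1 : 0 < p1) (hp2ρ : 0 < p2 + ρ) : b0 ≤ max 0 (q2 - d0) := by
  obtain ⟨ha0, hb0, -⟩ := hNE.1.1
  have h := (hNE.eq_of_le_of_P1_eq hp1 hp2ρ ha0 (le_min hb0 (le_max_left _ _)) le_rfl
    (min_le_left _ _) (P1_min_right ..)).2
  exact min_eq_left_iff.mp h

theorem d0_le_q2 (hq2 : 0 ≤ q2) (hp1ρ : 0 < p1 + ρ) (hp2 : 0 < p2) : d0 ≤ q2 := by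
  obtain ⟨hc0, hd0, -⟩ := hNE.1.2.1
  have h := (hNE.eq_of_le_of_P2_eq hp1ρ hp2 hc0 (le_min hd0 hq2) le_rfl (min_le_left _ _)
    (P2_min_right ..)).2
  exact min_eq_left_iff.mp h

theorem c0_le_max (hp1ρ : 0 < p1 + ρ) (hp2 : 0 < p2) : c0 ≤ max 0 (q1 - a0) := by
  obtain ⟨hc0, hd0, -⟩ := hNE.1.2.1
  have h := (hNE.eq_of_le_of_P2_eq hp1ρ hp2 (le_min hc0 (le_max_left _ _)) hd0
    (min_le_left _ _) le_rfl (P2_min_left ..)).1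
  exact min_eq_left_iff.mp h

end ExpMinNE

end

theorem lemma_2_1_general (Y1 Y2 q1 q2 ρ p1 p2 a0 b0 c0 d0 : ℝ)
    (hq1 : 0 < q1) (hq2 : 0 < q2) (hρ : 0 < ρ)
    (hp1 : 0 < p1) (hp2 : 0 < p2)
    (hNE : ExpMinNE Y1 Y2 q1 q2 p1 p2 ρ a0 b0 c0 d0) :
    a0 ≤ q1 ∧ d0 ≤ q2 ∧ a0 + c0 ≤ q1 ∧ b0 + d0 ≤ q2 := by
  have hp1ρ : 0 < p1 + ρ := by linarith
  have hp2ρ : 0 < p2 + ρ := by linarith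
  have ha0 := hNE.a0_le_q1 hq1.le hp1 hp2ρ
  have hd0 := hNE.d0_le_q2 hq2.le hp1ρ hp2
  have hc0 : c0 ≤ q1 - a0 := max_eq_right (sub_nonneg.mpr ha0) ▸ hNE.c0_le_max hp1ρ hp2
  have hb0 : b0 ≤ q2 - d0 := max_eq_right (sub_nonneg.mpr hd0) ▸ hNE.b0_le_max hp1 hp2ρ
  exact ⟨ha0, hd0, by linarith, by linarith⟩

/-- Lemma 2.1: at an expenditure-minimal Nash equilibrium, `α₀ ≤ q₁`, `δ₀ ≤ q₂`,
`α₀ + γ₀ ≤ q₁` and `β₀ + δ₀ ≤ q₂`. -/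
theorem lemma_2_1 (Y1 Y2 q1 q2 ρ p1 p2 a0 b0 c0 d0 : ℝ)
    (hY1 : 0 < Y1) (hY2 : 0 < Y2) (hq1 : 0 < q1) (hq2 : 0 < q2) (hρ : 0 < ρ)
    (hp1 : 0 < p1) (hp2 : 0 < p2)
    (hNE : ExpMinNE Y1 Y2 q1 q2 p1 p2 ρ a0 b0 c0 d0) :
    a0 ≤ q1 ∧ d0 ≤ q2 ∧ a0 + c0 ≤ q1 ∧ b0 + d0 ≤ q2 :=
  lemma_2_1_general Y1 Y2 q1 q2 ρ p1 p2 a0 b0 c0 d0 hq1 hq2 hρ hp1 hp2 hNE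
end
end

section
/- (Lemma 2.2) Assume p₁ > 0 and p₂ > 0, and let (α₀, β₀, γ₀, δ₀) be a Nash equilibrium. Then it is impossible that simultaneously α₀ + γ₀ < q₁ and Y₁ − p₂'·β₀ > p₁·q₁; likewise it is impossible that simultaneously β₀ + δ₀ < q₂ and Y₂ − p₁'·γ₀ > p₂·q₂. (Here q₁^cons = α₀ + γ₀ and q₂^cons = β₀ + δ₀ are total consumptions and Y₁^res = Y₁ − p₂'·β₀, Y₂^res = Y₂ − p₁'·γ₀ are residual incomes.) -/
open Filter

noncomputable section

/-!
If consumer I leaves part of the local supply unconsumed (`α₀ + γ₀ < q₁`) while the residual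
income exceeds `p₁ q₁`, then consumer I can afford to buy the whole local supply `q₁` and keep
`β₀`; since `min α₀ q₁ = α₀ < q₁`, this strictly raises the payoff, contradicting equilibrium.
The claim about consumer II is the same statement for the game with the two regions exchanged.
-/

theorem P1_lt_of_lt_supply {q1 q2 a a' b c d : ℝ} (h : a < a') (ha : a < q1) :
    P1 q1 q2 a b c d < P1 q1 q2 a' b c d := by
  have : a < min a' q1 := lt_min h ha
  unfold P1
  rw [min_eq_left ha.le]
  linarith

theorem S2_iff_S1_swap {Y p1 p2 ρ c d : ℝ} : S2 Y p1 p2 ρ c d ↔ S1 Y p2 p1 ρ d c := by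
  simp only [S1, S2, add_comm (c * (p1 + ρ)), and_left_comm]

-- The payoffs need no transport: `P1 q2 q1 d c b a` unfolds to `P2 q1 q2 a b c d` and vice versa.
theorem NashEq.swap {Y1 Y2 q1 q2 p1 p2 ρ a b c d : ℝ}
    (h : NashEq Y1 Y2 q1 q2 p1 p2 ρ a b c d) : NashEq Y2 Y1 q2 q1 p2 p1 ρ d c b a :=
  let ⟨hS1, hS2, hbest1, hbest2⟩ := h
  ⟨S2_iff_S1_swap.mp hS2, S2_iff_S1_swap.mpr hS1,
    fun x y hxy => hbest2 y x (S2_iff_S1_swap.mpr hxy),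
    fun x y hxy => hbest1 y x (S2_iff_S1_swap.mp hxy)⟩

theorem NashEq.not_consumption_lt_and_residual_gt {Y1 Y2 q1 q2 p1 p2 ρ a0 b0 c0 d0 : ℝ}
    (hNE : NashEq Y1 Y2 q1 q2 p1 p2 ρ a0 b0 c0 d0) :
    ¬(a0 + c0 < q1 ∧ Y1 - (p2 + ρ) * b0 > p1 * q1) := by
  rintro ⟨hunconsumed, hresidual⟩
  obtain ⟨⟨ha0, hb0, -⟩, ⟨hc0, -, -⟩, hbest, -⟩ := hNE
  have ha0q1 : a0 < q1 := by linarith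
  have haffordable : S1 Y1 p1 p2 ρ q1 b0 := ⟨by linarith, hb0, by linarith⟩
  exact (hbest q1 b0 haffordable).not_gt (P1_lt_of_lt_supply ha0q1 ha0q1)

theorem lemma_2_2_general (Y1 Y2 q1 q2 ρ p1 p2 a0 b0 c0 d0 : ℝ)
    (hNE : NashEq Y1 Y2 q1 q2 p1 p2 ρ a0 b0 c0 d0) :
    ¬(a0 + c0 < q1 ∧ Y1 - (p2 + ρ) * b0 > p1 * q1) ∧
    ¬(b0 + d0 < q2 ∧ Y2 - (p1 + ρ) * c0 > p2 * q2) :=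
  ⟨hNE.not_consumption_lt_and_residual_gt, by
    simpa only [add_comm b0 d0] using hNE.swap.not_consumption_lt_and_residual_gt⟩

/-- Lemma 2.2: at a Nash equilibrium it is impossible to simultaneously have
unconsumed local supply and residual income exceeding the value of local supply. -/
theorem lemma_2_2 (Y1 Y2 q1 q2 ρ p1 p2 a0 b0 c0 d0 : ℝ)
    (hY1 : 0 < Y1) (hY2 : 0 < Y2) (hq1 : 0 < q1) (hq2 : 0 < q2) (hρ : 0 < ρ)
    (hp1 : 0 < p1) (hp2 : 0 < p2)
    (hNE : NashEq Y1 Y2 q1 q2 p1 p2 ρ a0 b0 c0 d0) :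
    ¬(a0 + c0 < q1 ∧ Y1 - (p2 + ρ) * b0 > p1 * q1) ∧
    ¬(b0 + d0 < q2 ∧ Y2 - (p1 + ρ) * c0 > p2 * q2) :=
  lemma_2_2_general Y1 Y2 q1 q2 ρ p1 p2 a0 b0 c0 d0 hNE
end
end

section
/- (Corollary 2.3) Assume p₁ > 0 and p₂ > 0, and let (α₀, β₀, γ₀, δ₀) be an expenditure-minimal Nash equilibrium. Then exactly one of the following holds: (i) α₀ = q₁ (in which case Y₁ − p₂'·β₀ − p₁·q₁ = Y₁ − (p₁·α₀ + p₂'·β₀)); or (ii) α₀ < q₁ and the budget is exhausted: p₁·α₀ + p₂'·β₀ = Y₁. The analogous dichotomy holds for consumer II: either δ₀ = q₂, or δ₀ < q₂ and γ₀·p₁' + δ₀·p₂ = Y₂. -/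
/-!
Fix the opponent's orders and the consumer's order on the other market; what remains is the
choice of the own-market order `x`, worth `min x q` and costing `x * p` out of the remaining
budget. Ordering beyond the local supply `q` buys nothing, so an expenditure-minimal choice
never does it. Ordering short of `q` while money is left over is not a best response, since
spending the slack on the own market raises `min x q`.
-/

open Filter

noncomputable section

section OwnMarket

variable {p q s x₀ : ℝ}

theorem le_supply_of_expenditure_minimal (hp : 0 < p) (hq : 0 ≤ q) (hbudget : x₀ * p ≤ s)
    (hmin : ∀ x, 0 ≤ x → x * p ≤ s → min x q = min x₀ q → x₀ * p ≤ x * p) : x₀ ≤ q := by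
  by_contra! hlt
  have hcost := hmin q hq (by nlinarith) (by rw [min_self, min_eq_right hlt.le])
  nlinarith

theorem budget_exhausted_of_lt_supply (hp : 0 < p) (hx₀ : 0 ≤ x₀) (hlt : x₀ < q)
    (hbudget : x₀ * p ≤ s) (hbest : ∀ x, 0 ≤ x → x * p ≤ s → min x q ≤ min x₀ q) :
    x₀ * p = s := by
  by_contra hne
  have hslack : x₀ < s / p := (lt_div_iff₀ hp).2 (lt_of_le_of_ne hbudget hne)
  set x := min q (s / p)
  have hx₀x : x₀ < x := lt_min hlt hslack
  have hx : x * p ≤ s := (le_div_iff₀ hp).1 (min_le_right _ _)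
  have := hbest x (hx₀.trans hx₀x.le) hx
  rw [min_eq_left (min_le_left _ _), min_eq_left hlt.le] at this
  linarith

theorem eq_supply_or_budget_exhausted (hp : 0 < p) (hq : 0 ≤ q) (hx₀ : 0 ≤ x₀)
    (hbudget : x₀ * p ≤ s) (hbest : ∀ x, 0 ≤ x → x * p ≤ s → min x q ≤ min x₀ q)
    (hmin : ∀ x, 0 ≤ x → x * p ≤ s → min x q = min x₀ q → x₀ * p ≤ x * p) :
    x₀ = q ∨ (x₀ < q ∧ x₀ * p = s) := by
  rcases (le_supply_of_expenditure_minimal hp hq hbudget hmin).eq_or_lt with h | h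
  · exact Or.inl h
  · exact Or.inr ⟨h, budget_exhausted_of_lt_supply hp hx₀ h hbudget hbest⟩

end OwnMarket

namespace ExpMinNE

variable {Y1 Y2 q1 q2 p1 p2 ρ a0 b0 c0 d0 : ℝ}

theorem first_consumer_dichotomy (hq1 : 0 < q1) (hp1 : 0 < p1)
    (hNE : ExpMinNE Y1 Y2 q1 q2 p1 p2 ρ a0 b0 c0 d0) :
    a0 = q1 ∨ (a0 < q1 ∧ a0 * p1 = Y1 - b0 * (p2 + ρ)) := by
  obtain ⟨⟨⟨ha0, hb0, hbudget⟩, -, hbest, -⟩, hmin, -⟩ := hNE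
  refine eq_supply_or_budget_exhausted hp1 hq1.le ha0 (by linarith) (fun a ha hab => ?_)
    (fun a ha hab hP => ?_)
  · have := hbest a b0 ⟨ha, hb0, by linarith⟩
    simpa only [P1, add_le_add_iff_right] using this
  · have := hmin a b0 ⟨ha, hb0, by linarith⟩ (by simp only [P1, hP])
    linarith

theorem second_consumer_dichotomy (hq2 : 0 < q2) (hp2 : 0 < p2)
    (hNE : ExpMinNE Y1 Y2 q1 q2 p1 p2 ρ a0 b0 c0 d0) :
    d0 = q2 ∨ (d0 < q2 ∧ d0 * p2 = Y2 - c0 * (p1 + ρ)) := by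
  obtain ⟨⟨-, ⟨hc0, hd0, hbudget⟩, -, hbest⟩, -, hmin⟩ := hNE
  refine eq_supply_or_budget_exhausted hp2 hq2.le hd0 (by linarith) (fun d hd hcd => ?_)
    (fun d hd hcd hP => ?_)
  · have := hbest c0 d ⟨hc0, hd, by linarith⟩
    simpa only [P2, add_le_add_iff_right] using this
  · have := hmin c0 d ⟨hc0, hd, by linarith⟩ (by simp only [P2, hP])
    linarith

end ExpMinNE

theorem corollary_2_3_general (Y1 Y2 q1 q2 ρ p1 p2 a0 b0 c0 d0 : ℝ)
    (hq1 : 0 < q1) (hq2 : 0 < q2)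
    (hp1 : 0 < p1) (hp2 : 0 < p2)
    (hNE : ExpMinNE Y1 Y2 q1 q2 p1 p2 ρ a0 b0 c0 d0) :
    ((a0 = q1 ∧ Y1 - (p2 + ρ) * b0 - p1 * q1 = Y1 - (p1 * a0 + (p2 + ρ) * b0)) ∨
      (a0 < q1 ∧ p1 * a0 + (p2 + ρ) * b0 = Y1)) ∧
    (d0 = q2 ∨ (d0 < q2 ∧ c0 * (p1 + ρ) + d0 * p2 = Y2)) := by
  constructor
  · rcases hNE.first_consumer_dichotomy hq1 hp1 with rfl | ⟨hlt, hspent⟩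
    · exact Or.inl ⟨rfl, by ring⟩
    · exact Or.inr ⟨hlt, by linarith⟩
  · rcases hNE.second_consumer_dichotomy hq2 hp2 with h | ⟨hlt, hspent⟩
    · exact Or.inl h
    · exact Or.inr ⟨hlt, by linarith⟩

/-- Corollary 2.3: at an expenditure-minimal Nash equilibrium, for each consumer
exactly one of the following holds: the priority order equals local supply, or it
is smaller and the budget is exhausted. -/
theorem corollary_2_3 (Y1 Y2 q1 q2 ρ p1 p2 a0 b0 c0 d0 : ℝ)
    (hY1 : 0 < Y1) (hY2 : 0 < Y2) (hq1 : 0 < q1) (hq2 : 0 < q2) (hρ : 0 < ρ)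
    (hp1 : 0 < p1) (hp2 : 0 < p2)
    (hNE : ExpMinNE Y1 Y2 q1 q2 p1 p2 ρ a0 b0 c0 d0) :
    ((a0 = q1 ∧ Y1 - (p2 + ρ) * b0 - p1 * q1 = Y1 - (p1 * a0 + (p2 + ρ) * b0)) ∨
      (a0 < q1 ∧ p1 * a0 + (p2 + ρ) * b0 = Y1)) ∧
    (d0 = q2 ∨ (d0 < q2 ∧ c0 * (p1 + ρ) + d0 * p2 = Y2)) :=
  corollary_2_3_general Y1 Y2 q1 q2 ρ p1 p2 a0 b0 c0 d0 hq1 hq2 hp1 hp2 hNE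
end
end

section
/- (Proposition 2a, zone II-3) Assume p₁ > 0, p₂ > 0, Y₁ < p₁·q₁, p₂·q₂ < Y₂, and p₁'·(q₁ − Y₁/p₁) + p₂·q₂ ≤ Y₂ (the point (Y₁, Y₂) lies on or above the line ℓ₄). Then the quadruple (Y₁/p₁, 0, q₁ − Y₁/p₁, q₂) is an expenditure-minimal Nash equilibrium, and every expenditure-minimal Nash equilibrium equals it. At this equilibrium both supplies q₁, q₂ and the income Y₁ are fully depleted. -/
/-!
With the other consumer's purchases fixed, each consumer faces the same problem: maximise
`min x X + min y Z` over the bundles of two goods with prices `u, v` affordable on income `B`,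
where `X, Z` are the residual supplies. An expenditure-minimal optimum buys no more than a residual
supply, spends the whole income while the first good is not depleted, and then buys none of the
second good if that one is dearer.

In zone II-3 consumer I cannot afford all of good 1. If consumer II left some of good 2 unbought,
then either good 2 is cheaper than good 1 for II, who would spend all of `Y₂ > p₂ q₂` on it, or
good 1 is cheaper than good 2 for I (one of the two holds as `ρ > 0`), who then buys exactly
`Y₁/p₁` of good 1, and by `ℓ₄` the rest of the market costs II less than `Y₂`. So II buys all of
good 2, I buys only good 1, and II buys the remaining `q₁ − Y₁/p₁` of it.
-/

open Filter

noncomputable section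

theorem exists_pos_mul_le_and_mul_le {a b c d : ℝ} (ha : 0 < a) (hb : 0 < b) (hc : 0 < c)
    (hd : 0 < d) : ∃ t > 0, t * a ≤ b ∧ t * c ≤ d :=
  ⟨min (b / a) (d / c), lt_min (div_pos hb ha) (div_pos hd hc),
    (le_div_iff₀ ha).1 (min_le_left _ _), (le_div_iff₀ hc).1 (min_le_right _ _)⟩

namespace TwoGood

def payoff (X Z x y : ℝ) : ℝ := min x X + min y Z

def Affordable (B u v x y : ℝ) : Prop := 0 ≤ x ∧ 0 ≤ y ∧ x * u + y * v ≤ B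

def IsOptimal (B u v X Z x y : ℝ) : Prop :=
  Affordable B u v x y ∧ ∀ x' y', Affordable B u v x' y' → payoff X Z x' y' ≤ payoff X Z x y

def IsCheapestOptimal (B u v X Z x y : ℝ) : Prop :=
  IsOptimal B u v X Z x y ∧ ∀ x' y', Affordable B u v x' y' →
    payoff X Z x' y' = payoff X Z x y → x * u + y * v ≤ x' * u + y' * v

variable {B u v X Z x y : ℝ}

theorem Affordable.le_div (h : Affordable B u v x y) (hu : 0 < u) (hv : 0 ≤ v) : x ≤ B / u := by
  obtain ⟨-, hy, hB⟩ := h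
  rw [le_div_iff₀ hu]
  nlinarith

theorem Affordable.lt_of_lt_mul (h : Affordable B u v x y) (hu : 0 < u) (hv : 0 ≤ v)
    (hB : B < u * X) : x < X :=
  (h.le_div hu hv).trans_lt ((div_lt_iff₀' hu).2 hB)

theorem IsCheapestOptimal.le_left_cap (h : IsCheapestOptimal B u v X Z x y) (hu : 0 < u)
    (hX : 0 ≤ X) : x ≤ X := by
  by_contra! hXx
  obtain ⟨⟨⟨-, hy, hB⟩, -⟩, hcheap⟩ := h
  have hsame : payoff X Z X y = payoff X Z x y := by
    simp only [payoff, min_self, min_eq_right hXx.le]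
  have := hcheap X y ⟨hX, hy, by nlinarith⟩ hsame
  nlinarith

theorem IsCheapestOptimal.le_right_cap (h : IsCheapestOptimal B u v X Z x y) (hv : 0 < v)
    (hZ : 0 ≤ Z) : y ≤ Z := by
  by_contra! hZy
  obtain ⟨⟨⟨hx, -, hB⟩, -⟩, hcheap⟩ := h
  have hsame : payoff X Z x Z = payoff X Z x y := by
    simp only [payoff, min_self, min_eq_right hZy.le]
  have := hcheap x Z ⟨hx, hZ, by nlinarith⟩ hsame
  nlinarith

theorem IsOptimal.spend_eq_of_lt (h : IsOptimal B u v X Z x y) (hu : 0 < u) (hx : x < X) :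
    x * u + y * v = B := by
  obtain ⟨⟨hx0, hy, hB⟩, hopt⟩ := h
  by_contra hne
  obtain ⟨ε, hε, hεX, hεB⟩ :=
    exists_pos_mul_le_and_mul_le one_pos (sub_pos.2 hx) hu (sub_pos.2 (lt_of_le_of_ne hB hne))
  have := hopt (x + ε) y ⟨by linarith, hy, by linarith⟩
  simp only [payoff, min_eq_left hx.le, min_eq_left (by linarith : x + ε ≤ X)] at this
  linarith

/-- Trading `t u` of the dearer good `y` for `t v` of the cheaper good `x` costs nothing and gains
`t (v - u)`. -/
theorem IsOptimal.right_eq_zero (h : IsOptimal B u v X Z x y) (hu : 0 < u) (huv : u < v)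
    (hx : x < X) (hy : y ≤ Z) : y = 0 := by
  obtain ⟨⟨hx0, hy0, hB⟩, hopt⟩ := h
  by_contra hne
  obtain ⟨t, ht, htu, htv⟩ := exists_pos_mul_le_and_mul_le hu (lt_of_le_of_ne hy0 (Ne.symm hne))
    (hu.trans huv) (sub_pos.2 hx)
  have := hopt (x + t * v) (y - t * u) ⟨by nlinarith, by linarith, by linarith⟩
  simp only [payoff, min_eq_left hx.le, min_eq_left hy, min_eq_left (by linarith : x + t * v ≤ X),
    min_eq_left (by nlinarith : y - t * u ≤ Z)] at this
  nlinarith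

theorem isCheapestOptimal_caps (hu : 0 ≤ u) (hv : 0 ≤ v) (hX : 0 ≤ X) (hZ : 0 ≤ Z)
    (hB : X * u + Z * v ≤ B) : IsCheapestOptimal B u v X Z X Z := by
  refine ⟨⟨⟨hX, hZ, hB⟩, fun x' y' _ => ?_⟩, fun x' y' _ hsame => ?_⟩
  · simp only [payoff, min_self]
    linarith [min_le_right x' X, min_le_right y' Z]
  · simp only [payoff, min_self] at hsame
    have hXx : X ≤ x' := by linarith [min_le_left x' X, min_le_right x' X, min_le_right y' Z]
    have hZy : Z ≤ y' := by linarith [min_le_left y' Z, min_le_right x' X, min_le_right y' Z]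
    nlinarith

theorem isCheapestOptimal_div (hu : 0 < u) (hv : 0 ≤ v) (hB : 0 ≤ B) (hX : B / u ≤ X) :
    IsCheapestOptimal B u v X 0 (B / u) 0 := by
  have hpay : payoff X 0 (B / u) 0 = B / u := by simp [payoff, min_eq_left hX]
  have hspend : B / u * u + 0 * v = B := by rw [div_mul_cancel₀ B hu.ne', zero_mul, add_zero]
  refine ⟨⟨⟨div_nonneg hB hu.le, le_rfl, hspend.le⟩, fun x' y' hxy => ?_⟩, fun x' y' hxy hsame => ?_⟩
  · rw [hpay, payoff]
    linarith [hxy.le_div hu hv, min_le_left x' X, min_le_right y' 0]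
  · rw [hpay, payoff] at hsame
    have hx' : B / u ≤ x' := by linarith [min_le_left x' X, min_le_right y' 0]
    rw [hspend]
    have := (div_le_iff₀ hu).1 hx'
    nlinarith [hxy.2.1]

end TwoGood

open TwoGood

theorem expMinNE_iff {Y1 Y2 q1 q2 p1 p2 ρ a b c d : ℝ} :
    ExpMinNE Y1 Y2 q1 q2 p1 p2 ρ a b c d ↔
      IsCheapestOptimal Y1 p1 (p2 + ρ) q1 (max 0 (q2 - d)) a b ∧
      IsCheapestOptimal Y2 p2 (p1 + ρ) q2 (max 0 (q1 - a)) d c := by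
  have hS2 : ∀ c d, S2 Y2 p1 p2 ρ c d ↔ Affordable Y2 p2 (p1 + ρ) d c := fun c d => by
    simp only [S2, Affordable]
    constructor <;> rintro ⟨h1, h2, h3⟩ <;> exact ⟨h2, h1, by linarith⟩
  have hspend2 : ∀ c d, c * (p1 + ρ) + d * p2 = d * p2 + c * (p1 + ρ) := fun _ _ => add_comm _ _
  simp only [ExpMinNE, NashEq, IsCheapestOptimal, IsOptimal, hS2, hspend2]
  exact ⟨fun ⟨⟨h1, h2, h3, h4⟩, h5, h6⟩ => ⟨⟨⟨h1, h3⟩, h5⟩, ⟨h2, fun x y h => h4 y x h⟩,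
      fun x y h => h6 y x h⟩,
    fun ⟨⟨⟨h1, h3⟩, h5⟩, ⟨h2, h4⟩, h6⟩ => ⟨⟨h1, h2, h3, fun x y h => h4 y x h⟩, h5,
      fun x y h => h6 y x h⟩⟩

section ZoneII3

variable {Y1 Y2 q1 q2 p1 p2 ρ a b c d : ℝ}

theorem ExpMinNE.eq_q2 (h : ExpMinNE Y1 Y2 q1 q2 p1 p2 ρ a b c d) (hq2 : 0 ≤ q2) (hρ : 0 < ρ)
    (hp1 : 0 < p1) (hp2 : 0 < p2) (h1 : Y1 < p1 * q1) (h2 : p2 * q2 < Y2)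
    (hl4 : (p1 + ρ) * (q1 - Y1 / p1) + p2 * q2 ≤ Y2) : d = q2 := by
  obtain ⟨hI, hII⟩ := expMinNE_iff.1 h
  have ha : a < q1 := hI.1.1.lt_of_lt_mul hp1 (by linarith) h1
  have hc : c ≤ max 0 (q1 - a) := hII.le_right_cap (by linarith) (le_max_left _ _)
  by_contra hne
  have hd : d < q2 := lt_of_le_of_ne (hII.le_left_cap hp2 hq2) hne
  have hspendII := hII.1.spend_eq_of_lt hp2 hd
  rcases lt_or_ge p2 (p1 + ρ) with hcheap2 | hcheap1
  · have hc0 : c = 0 := hII.1.right_eq_zero hp2 hcheap2 hd hc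
    subst hc0
    nlinarith
  · have hb0 : b = 0 := hI.1.right_eq_zero hp1 (by linarith) ha
      (hI.le_right_cap (by linarith) (le_max_left _ _))
    have hspendI := hI.1.spend_eq_of_lt hp1 ha
    have haA : a = Y1 / p1 := by
      rw [eq_div_iff hp1.ne']
      simpa [hb0] using hspendI
    rw [max_eq_right (by linarith), haA] at hc
    nlinarith

theorem ExpMinNE.eq_zoneII3 (h : ExpMinNE Y1 Y2 q1 q2 p1 p2 ρ a b c d) (hq2 : 0 ≤ q2)
    (hρ : 0 < ρ) (hp1 : 0 < p1) (hp2 : 0 < p2) (h1 : Y1 < p1 * q1) (h2 : p2 * q2 < Y2)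
    (hl4 : (p1 + ρ) * (q1 - Y1 / p1) + p2 * q2 ≤ Y2) :
    a = Y1 / p1 ∧ b = 0 ∧ c = q1 - Y1 / p1 ∧ d = q2 := by
  have hd : d = q2 := h.eq_q2 hq2 hρ hp1 hp2 h1 h2 hl4
  obtain ⟨hI, hII⟩ := expMinNE_iff.1 h
  subst hd
  have hb : b = 0 := by
    have := hI.le_right_cap (by linarith) (le_max_left _ _)
    rw [sub_self, max_self] at this
    exact le_antisymm this hI.1.1.2.1
  have ha : a = Y1 / p1 := by
    rw [eq_div_iff hp1.ne']
    simpa [hb] using hI.1.spend_eq_of_lt hp1 (hI.1.1.lt_of_lt_mul hp1 (by linarith) h1)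
  subst ha
  have hA : 0 ≤ q1 - Y1 / p1 := by
    rw [sub_nonneg, div_le_iff₀ hp1]
    linarith
  have hc : c ≤ q1 - Y1 / p1 := by
    simpa [max_eq_right hA] using hII.le_right_cap (by linarith) (le_max_left _ _)
  have hopt := hII.1.2 d (q1 - Y1 / p1) ⟨hq2, hA, by linarith⟩
  simp only [payoff, min_self, max_eq_right hA, min_eq_left hc] at hopt
  exact ⟨rfl, hb, le_antisymm hc (by linarith), rfl⟩

end ZoneII3

theorem zoneII3_nash_general (Y1 Y2 q1 q2 ρ p1 p2 : ℝ)
    (hY1 : 0 < Y1) (hq2 : 0 < q2) (hρ : 0 < ρ)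
    (hp1 : 0 < p1) (hp2 : 0 < p2)
    (h1 : Y1 < p1 * q1) (h2 : p2 * q2 < Y2)
    (hl4 : (p1 + ρ) * (q1 - Y1 / p1) + p2 * q2 ≤ Y2) :
    ExpMinNE Y1 Y2 q1 q2 p1 p2 ρ (Y1 / p1) 0 (q1 - Y1 / p1) q2 ∧
    (∀ a0 b0 c0 d0 : ℝ, ExpMinNE Y1 Y2 q1 q2 p1 p2 ρ a0 b0 c0 d0 →
      a0 = Y1 / p1 ∧ b0 = 0 ∧ c0 = q1 - Y1 / p1 ∧ d0 = q2) ∧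
    (Y1 / p1 + (q1 - Y1 / p1) = q1 ∧ (0 : ℝ) + q2 = q2 ∧
      p1 * (Y1 / p1) + (p2 + ρ) * 0 = Y1) := by
  have hA : Y1 / p1 ≤ q1 := by
    rw [div_le_iff₀ hp1]
    linarith
  refine ⟨expMinNE_iff.2 ⟨?_, ?_⟩, fun _ _ _ _ h => h.eq_zoneII3 hq2.le hρ hp1 hp2 h1 h2 hl4,
    by ring, by ring, by rw [mul_zero, add_zero, mul_div_cancel₀ Y1 hp1.ne']⟩
  · rw [sub_self, max_self]
    exact isCheapestOptimal_div hp1 (by linarith) hY1.le hA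
  · rw [max_eq_right (sub_nonneg.2 hA)]
    exact isCheapestOptimal_caps hp2.le (by linarith) hq2.le (sub_nonneg.2 hA) (by linarith)

/-- Proposition 2a (zone II-3): the quadruple `(Y₁/p₁, 0, q₁ − Y₁/p₁, q₂)` is the
unique expenditure-minimal Nash equilibrium, and at it both supplies and the
income `Y₁` are fully depleted. -/
theorem zoneII3_nash (Y1 Y2 q1 q2 ρ p1 p2 : ℝ)
    (hY1 : 0 < Y1) (hY2 : 0 < Y2) (hq1 : 0 < q1) (hq2 : 0 < q2) (hρ : 0 < ρ)
    (hp1 : 0 < p1) (hp2 : 0 < p2)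
    (h1 : Y1 < p1 * q1) (h2 : p2 * q2 < Y2)
    (hl4 : (p1 + ρ) * (q1 - Y1 / p1) + p2 * q2 ≤ Y2) :
    ExpMinNE Y1 Y2 q1 q2 p1 p2 ρ (Y1 / p1) 0 (q1 - Y1 / p1) q2 ∧
    (∀ a0 b0 c0 d0 : ℝ, ExpMinNE Y1 Y2 q1 q2 p1 p2 ρ a0 b0 c0 d0 →
      a0 = Y1 / p1 ∧ b0 = 0 ∧ c0 = q1 - Y1 / p1 ∧ d0 = q2) ∧
    (Y1 / p1 + (q1 - Y1 / p1) = q1 ∧ (0 : ℝ) + q2 = q2 ∧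
      p1 * (Y1 / p1) + (p2 + ρ) * 0 = Y1) :=
  zoneII3_nash_general Y1 Y2 q1 q2 ρ p1 p2 hY1 hq2 hρ hp1 hp2 h1 h2 hl4
end
end

section
/- (Proposition 2b, zone II-2, type I) Assume p₁ > 0, p₂ > 0, p₁ + ρ < p₂ (i.e. Δp = p₁ − p₂ < −ρ), Y₁ < p₁·q₁, p₂·q₂ ≤ Y₂, Y₂ − p₁'·(q₁ − Y₁/p₁) < p₂·q₂ (strictly below ℓ₄), and Y₁/p₁ + Y₂/p₁' ≥ q₁ (on or above ℓ₁). Then the quadruple (Y₁/p₁, 0, q₁ − Y₁/p₁, (Y₂ − p₁'·(q₁ − Y₁/p₁))/p₂) is a Nash equilibrium. -/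
open Filter

noncomputable section

/-! Consumer I spends the whole income on the local good 1, the cheapest way for them to obtain a
unit, so no deviation yields more than `Y₁/p₁` units. Consumer II buys exactly the part of good 1
that I leaves over and spends the rest on the dearer good 2, staying below `q₂`: extra units of
good 1 are worthless to II, and replacing units of good 1 by units of good 2 costs more, so no
deviation yields more units either. -/

theorem add_le_add_of_cost_le {p p' x y x₀ y₀ : ℝ} (hp : 0 < p) (hp' : p' ≤ p) (hx : x ≤ x₀)
    (hcost : x * p' + y * p ≤ x₀ * p' + y₀ * p) : x + y ≤ x₀ + y₀ := by
  have : (y - y₀) * p ≤ (x₀ - x) * p := by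
    nlinarith [mul_le_mul_of_nonneg_left hp' (sub_nonneg.2 hx)]
  linarith [le_of_mul_le_mul_right this hp]

section BestResponse

variable {Y1 Y2 q1 q2 p1 p2 ρ a b c d : ℝ}

theorem add_le_div_of_S1 (hp1 : 0 < p1) (hcheap : p1 ≤ p2 + ρ) (hab : S1 Y1 p1 p2 ρ a b) :
    a + b ≤ Y1 / p1 := by
  obtain ⟨-, hb, hbudget⟩ := hab
  rw [le_div_iff₀ hp1]
  nlinarith [mul_le_mul_of_nonneg_left hcheap hb]

theorem P1_le_P1_spend_all_on_good1 (hp1 : 0 < p1) (hcheap : p1 ≤ p2 + ρ)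
    (hq1 : Y1 / p1 ≤ q1) (hab : S1 Y1 p1 p2 ρ a b) :
    P1 q1 q2 a b c d ≤ P1 q1 q2 (Y1 / p1) 0 c d :=
  calc P1 q1 q2 a b c d ≤ a + b := add_le_add (min_le_left _ _) (min_le_left _ _)
    _ ≤ Y1 / p1 := add_le_div_of_S1 hp1 hcheap hab
    _ = P1 q1 q2 (Y1 / p1) 0 c d := by simp [P1, hq1]

theorem P2_le_P2_buy_leftover {a0 b0 c0 d0 : ℝ} (hp2 : 0 < p2) (hp1' : 0 ≤ p1 + ρ)
    (hcheap : p1 + ρ ≤ p2) (hc0 : max 0 (q1 - a0) = c0) (hd0 : d0 ≤ q2)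
    (hspend : Y2 ≤ c0 * (p1 + ρ) + d0 * p2) (hcd : S2 Y2 p1 p2 ρ c d) :
    P2 q1 q2 a0 b0 c d ≤ P2 q1 q2 a0 b0 c0 d0 := by
  obtain ⟨-, -, hbudget⟩ := hcd
  have hcost : min c c0 * (p1 + ρ) + min d q2 * p2 ≤ c0 * (p1 + ρ) + d0 * p2 := by
    nlinarith [mul_le_mul_of_nonneg_right (min_le_left c c0) hp1',
      mul_le_mul_of_nonneg_right (min_le_left d q2) hp2.le]
  have := add_le_add_of_cost_le hp2 hcheap (min_le_right c c0) hcost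
  simp only [P2, hc0, min_eq_left hd0, min_self]
  linarith

end BestResponse

theorem zoneII2_typeI_nash_general (Y1 Y2 q1 q2 ρ p1 p2 : ℝ)
    (hY1 : 0 < Y1) (hρ : 0 < ρ)
    (hp1 : 0 < p1) (hp2 : 0 < p2)
    (hΔ : p1 + ρ < p2)
    (h1 : Y1 < p1 * q1)
    (hl4 : Y2 - (p1 + ρ) * (q1 - Y1 / p1) < p2 * q2)
    (hl1 : Y1 / p1 + Y2 / (p1 + ρ) ≥ q1) :
    NashEq Y1 Y2 q1 q2 p1 p2 ρ (Y1 / p1) 0 (q1 - Y1 / p1)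
      ((Y2 - (p1 + ρ) * (q1 - Y1 / p1)) / p2) := by
  have hp1' : 0 < p1 + ρ := by linarith
  have hq1 : Y1 / p1 ≤ q1 := (div_le_iff₀ hp1).2 (by linarith)
  have hc0_cost : (p1 + ρ) * (q1 - Y1 / p1) ≤ Y2 := (le_div_iff₀' hp1').1 (by linarith)
  have hd0_cost : (Y2 - (p1 + ρ) * (q1 - Y1 / p1)) / p2 * p2 = Y2 - (p1 + ρ) * (q1 - Y1 / p1) :=
    div_mul_cancel₀ _ hp2.ne'
  refine ⟨⟨div_nonneg hY1.le hp1.le, le_rfl, by simp [hp1.ne']⟩,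
    ⟨sub_nonneg.2 hq1, div_nonneg (sub_nonneg.2 hc0_cost) hp2.le, by linarith⟩,
    fun a b hab => P1_le_P1_spend_all_on_good1 hp1 (by linarith) hq1 hab,
    fun c d hcd => P2_le_P2_buy_leftover hp2 hp1'.le hΔ.le (max_eq_right (sub_nonneg.2 hq1))
      ((div_le_iff₀ hp2).2 (by linarith)) (by linarith) hcd⟩

/-- Proposition 2b (zone II-2, type I, `Δp < −ρ`): the quadruple
`(Y₁/p₁, 0, q₁ − Y₁/p₁, (Y₂ − p₁'(q₁ − Y₁/p₁))/p₂)` is a Nash equilibrium. -/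
theorem zoneII2_typeI_nash (Y1 Y2 q1 q2 ρ p1 p2 : ℝ)
    (hY1 : 0 < Y1) (hY2 : 0 < Y2) (hq1 : 0 < q1) (hq2 : 0 < q2) (hρ : 0 < ρ)
    (hp1 : 0 < p1) (hp2 : 0 < p2)
    (hΔ : p1 + ρ < p2)
    (h1 : Y1 < p1 * q1) (h2 : p2 * q2 ≤ Y2)
    (hl4 : Y2 - (p1 + ρ) * (q1 - Y1 / p1) < p2 * q2)
    (hl1 : Y1 / p1 + Y2 / (p1 + ρ) ≥ q1) :
    NashEq Y1 Y2 q1 q2 p1 p2 ρ (Y1 / p1) 0 (q1 - Y1 / p1)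
      ((Y2 - (p1 + ρ) * (q1 - Y1 / p1)) / p2) :=
  zoneII2_typeI_nash_general Y1 Y2 q1 q2 ρ p1 p2 hY1 hρ hp1 hp2 hΔ h1 hl4 hl1
end
end

section
/- (Proposition 2b, zone II-2, type II) Assume p₁ > 0, p₂ > 0, p₂ ≤ p₁ + ρ (i.e. Δp = p₁ − p₂ ≥ −ρ), Y₁ < p₁·q₁, p₂·q₂ ≤ Y₂, and Y₂ − p₂·q₂ < p₁'·(q₁ − Y₁/p₁) (the point (Y₁, Y₂) lies strictly below the line ℓ₄). Then the quadruple (Y₁/p₁, 0, (Y₂ − p₂·q₂)/p₁', q₂) is a Nash equilibrium. -/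
/-!
Against `δ = q₂` the remote good is sold out, so consumer I can only buy at home, and spending the
whole income there is optimal. Against `α = Y₁/p₁` consumer II gets one unit per unit bought at
home and one per unit of the remaining supply `q₁ − Y₁/p₁` bought abroad. Since `p₂ ≤ p₁ + ρ`,
buying at home is the cheaper way to gain payoff, so consumer II fills the home supply `q₂` first
and spends the rest, `Y₂ − p₂q₂`, abroad; below `ℓ₄` this does not exhaust the remote supply.
-/

open Filter

noncomputable section

lemma P1_zero_remote_of_le {q1 q2 a c d : ℝ} (ha : a ≤ q1) : P1 q1 q2 a 0 c d = a := by
  simp [P1, ha]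

lemma P1_le_of_remote_sold_out (q1 q2 a b c : ℝ) : P1 q1 q2 a b c q2 ≤ a := by
  simp only [P1, sub_self, max_self]
  linarith [min_le_left a q1, min_le_right b 0]

lemma P2_remote_sold_out_eq {q1 q2 a b c : ℝ} (hc : 0 ≤ c) (hca : c ≤ q1 - a) :
    P2 q1 q2 a b c q2 = q2 + c := by
  simp [P2, max_eq_right (hc.trans hca), hca]

lemma P2_le_min_add (q1 q2 a b c d : ℝ) : P2 q1 q2 a b c d ≤ min d q2 + c :=
  add_le_add_right (min_le_left _ _) _

lemma S1.le_div {Y1 p1 p2 ρ a b : ℝ} (h : S1 Y1 p1 p2 ρ a b) (hp1 : 0 < p1)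
    (hremote : 0 ≤ p2 + ρ) : a ≤ Y1 / p1 := by
  obtain ⟨-, hb, hbudget⟩ := h
  rw [le_div_iff₀ hp1]
  nlinarith [mul_nonneg hb hremote]

/-- The optimum buys the cheaper good `d` up to its cap `q` and spends the rest on `c`. -/
lemma min_add_le_of_budget {c d p p' q Y : ℝ} (hp : 0 ≤ p) (hpp' : p ≤ p') (hp' : 0 < p')
    (hbudget : c * p' + d * p ≤ Y) : min d q + c ≤ q + (Y - p * q) / p' := by
  rcases le_total q d with hqd | hdq
  · have hc : c ≤ (Y - p * q) / p' := by
      rw [le_div_iff₀ hp']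
      nlinarith [mul_le_mul_of_nonneg_left hqd hp]
    linarith [min_le_right d q]
  · have hcd : c + d ≤ q + (Y - p * q) / p' := by
      rw [← sub_le_iff_le_add', le_div_iff₀ hp']
      nlinarith [mul_le_mul_of_nonneg_right hdq (sub_nonneg.mpr hpp')]
    linarith [min_le_left d q]

theorem zoneII2_typeII_nash_general (Y1 Y2 q1 q2 ρ p1 p2 : ℝ)
    (hY1 : 0 < Y1) (hq2 : 0 < q2) (hρ : 0 < ρ)
    (hp1 : 0 < p1) (hp2 : 0 < p2)
    (hΔ : p2 ≤ p1 + ρ)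
    (h1 : Y1 < p1 * q1) (h2 : p2 * q2 ≤ Y2)
    (hl4 : Y2 - p2 * q2 < (p1 + ρ) * (q1 - Y1 / p1)) :
    NashEq Y1 Y2 q1 q2 p1 p2 ρ (Y1 / p1) 0 ((Y2 - p2 * q2) / (p1 + ρ)) q2 := by
  have hp1' : 0 < p1 + ρ := by linarith
  have ha0 : Y1 / p1 ≤ q1 := by rw [div_le_iff₀ hp1]; linarith
  have hc0 : 0 ≤ (Y2 - p2 * q2) / (p1 + ρ) := div_nonneg (by linarith) hp1'.le
  have hc0a0 : (Y2 - p2 * q2) / (p1 + ρ) ≤ q1 - Y1 / p1 := by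
    rw [div_le_iff₀ hp1']; linarith
  refine ⟨⟨by positivity, le_rfl, by simp [div_mul_cancel₀ _ hp1.ne']⟩,
    ⟨hc0, hq2.le, by rw [div_mul_cancel₀ _ hp1'.ne']; linarith⟩, ?_, ?_⟩
  · intro a b hab
    rw [P1_zero_remote_of_le ha0]
    exact (P1_le_of_remote_sold_out q1 q2 a b _).trans (hab.le_div hp1 (by linarith))
  · rintro c d ⟨-, -, hbudget⟩
    rw [P2_remote_sold_out_eq hc0 hc0a0]
    exact (P2_le_min_add q1 q2 _ _ c d).trans (min_add_le_of_budget hp2.le hΔ hp1' hbudget)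

/-- Proposition 2b (zone II-2, type II, `Δp ≥ −ρ`): the quadruple
`(Y₁/p₁, 0, (Y₂ − p₂q₂)/p₁', q₂)` is a Nash equilibrium. -/
theorem zoneII2_typeII_nash (Y1 Y2 q1 q2 ρ p1 p2 : ℝ)
    (hY1 : 0 < Y1) (hY2 : 0 < Y2) (hq1 : 0 < q1) (hq2 : 0 < q2) (hρ : 0 < ρ)
    (hp1 : 0 < p1) (hp2 : 0 < p2)
    (hΔ : p2 ≤ p1 + ρ)
    (h1 : Y1 < p1 * q1) (h2 : p2 * q2 ≤ Y2)
    (hl4 : Y2 - p2 * q2 < (p1 + ρ) * (q1 - Y1 / p1)) :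
    NashEq Y1 Y2 q1 q2 p1 p2 ρ (Y1 / p1) 0 ((Y2 - p2 * q2) / (p1 + ρ)) q2 :=
  zoneII2_typeII_nash_general Y1 Y2 q1 q2 ρ p1 p2 hY1 hq2 hρ hp1 hp2 hΔ h1 h2 hl4
end
end

section
/- (Proposition 2c, zone II-1, type I) Assume p₁ > 0, p₂ > 0, p₁ + ρ < p₂ (i.e. Δp = p₁ − p₂ < −ρ), Y₁ < p₁·q₁, p₂·q₂ ≤ Y₂, and Y₁/p₁ + Y₂/p₁' < q₁ (the point (Y₁, Y₂) lies strictly below the line ℓ₁). Then the quadruple (Y₁/p₁, 0, Y₂/p₁', 0) is a Nash equilibrium. -/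
/-!
A consumer's payoff never exceeds the quantity bought, and since market 1 is the cheaper one for
both consumers (`p₁ ≤ p₂ + ρ` and `p₁ + ρ < p₂`), no affordable bundle contains more than
`Y₁/p₁`, resp. `Y₂/p₁'`, units. Spending the whole budget in market 1 attains this bound: below
`ℓ₁` the two purchases together fit within the supply `q₁`, so neither consumer is rationed.
-/

open Filter

noncomputable section

theorem add_le_div_of_mul_add_mul_le {a b p p' Y : ℝ} (hb : 0 ≤ b) (hp : 0 < p)
    (hpp' : p ≤ p') (h : a * p + b * p' ≤ Y) : a + b ≤ Y / p := by
  rw [le_div_iff₀ hp]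
  nlinarith

theorem P1_le_of_S1 {Y1 q1 q2 p1 p2 ρ a b c d : ℝ} (hp1 : 0 < p1) (hcheap : p1 ≤ p2 + ρ)
    (h : S1 Y1 p1 p2 ρ a b) : P1 q1 q2 a b c d ≤ Y1 / p1 :=
  calc P1 q1 q2 a b c d ≤ a + b := add_le_add (min_le_left _ _) (min_le_left _ _)
    _ ≤ Y1 / p1 := add_le_div_of_mul_add_mul_le h.2.1 hp1 hcheap h.2.2

theorem P2_le_of_S2 {Y2 q1 q2 p1 p2 ρ a b c d : ℝ} (hp1ρ : 0 < p1 + ρ) (hcheap : p1 + ρ ≤ p2)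
    (h : S2 Y2 p1 p2 ρ c d) : P2 q1 q2 a b c d ≤ Y2 / (p1 + ρ) :=
  calc P2 q1 q2 a b c d ≤ d + c := add_le_add (min_le_left _ _) (min_le_left _ _)
    _ = c + d := add_comm d c
    _ ≤ Y2 / (p1 + ρ) := add_le_div_of_mul_add_mul_le h.2.1 hp1ρ hcheap h.2.2

theorem S1_div_zero {Y1 p1 p2 ρ : ℝ} (hY1 : 0 ≤ Y1) (hp1 : 0 < p1) : S1 Y1 p1 p2 ρ (Y1 / p1) 0 :=
  ⟨div_nonneg hY1 hp1.le, le_rfl, by rw [div_mul_cancel₀ _ hp1.ne', zero_mul, add_zero]⟩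

theorem S2_div_zero {Y2 p1 p2 ρ : ℝ} (hY2 : 0 ≤ Y2) (hp1ρ : 0 < p1 + ρ) :
    S2 Y2 p1 p2 ρ (Y2 / (p1 + ρ)) 0 :=
  ⟨div_nonneg hY2 hp1ρ.le, le_rfl, by rw [div_mul_cancel₀ _ hp1ρ.ne', zero_mul, add_zero]⟩

theorem P1_zero_snd (q1 q2 a c d : ℝ) : P1 q1 q2 a 0 c d = min a q1 := by
  rw [P1, min_eq_left (le_max_left 0 _), add_zero]

theorem P2_of_le_sub {q1 q2 a b c : ℝ} (hq2 : 0 ≤ q2) (hc : c ≤ q1 - a) :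
    P2 q1 q2 a b c 0 = c := by
  simp only [P2, min_eq_left hq2, min_eq_left (hc.trans (le_max_right 0 _)), zero_add]

theorem zoneII1_typeI_nash_general (Y1 Y2 q1 q2 ρ p1 p2 : ℝ)
    (hY1 : 0 < Y1) (hY2 : 0 < Y2) (hq2 : 0 < q2) (hρ : 0 < ρ)
    (hp1 : 0 < p1)
    (hΔ : p1 + ρ < p2)
    (hl1 : Y1 / p1 + Y2 / (p1 + ρ) < q1) :
    NashEq Y1 Y2 q1 q2 p1 p2 ρ (Y1 / p1) 0 (Y2 / (p1 + ρ)) 0 := by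
  have hp1ρ : 0 < p1 + ρ := by linarith
  have hc0 : 0 ≤ Y2 / (p1 + ρ) := div_nonneg hY2.le hp1ρ.le
  have hP1 : P1 q1 q2 (Y1 / p1) 0 (Y2 / (p1 + ρ)) 0 = Y1 / p1 := by
    rw [P1_zero_snd, min_eq_left (by linarith)]
  have hP2 : P2 q1 q2 (Y1 / p1) 0 (Y2 / (p1 + ρ)) 0 = Y2 / (p1 + ρ) :=
    P2_of_le_sub hq2.le (by linarith)
  refine ⟨S1_div_zero hY1.le hp1, S2_div_zero hY2.le hp1ρ, ?_, ?_⟩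
  · intro a b hab
    rw [hP1]
    exact P1_le_of_S1 hp1 (by linarith) hab
  · intro c d hcd
    rw [hP2]
    exact P2_le_of_S2 hp1ρ hΔ.le hcd

/-- Proposition 2c (zone II-1, type I, `Δp < −ρ`): the quadruple
`(Y₁/p₁, 0, Y₂/p₁', 0)` is a Nash equilibrium. -/
theorem zoneII1_typeI_nash (Y1 Y2 q1 q2 ρ p1 p2 : ℝ)
    (hY1 : 0 < Y1) (hY2 : 0 < Y2) (hq1 : 0 < q1) (hq2 : 0 < q2) (hρ : 0 < ρ)
    (hp1 : 0 < p1) (hp2 : 0 < p2)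
    (hΔ : p1 + ρ < p2)
    (h1 : Y1 < p1 * q1) (h2 : p2 * q2 ≤ Y2)
    (hl1 : Y1 / p1 + Y2 / (p1 + ρ) < q1) :
    NashEq Y1 Y2 q1 q2 p1 p2 ρ (Y1 / p1) 0 (Y2 / (p1 + ρ)) 0 :=
  zoneII1_typeI_nash_general Y1 Y2 q1 q2 ρ p1 p2 hY1 hY2 hq2 hρ hp1 hΔ hl1
end
end

section
/- (Proposition 3c, zone I-3, Δp > ρ) Assume p₁ > 0, p₂ > 0, p₁ > p₂ + ρ (i.e. Δp > ρ), 0 < Y₁ < p₁·q₁, 0 < Y₂ < p₂·q₂, and Y₁/p₂' + Y₂/p₂ < q₂ (the point (Y₁, Y₂) lies strictly below the line ℓ₂). Then the quadruple (0, Y₁/p₂', 0, Y₂/p₂) is a Nash equilibrium, in which consumer I spends the entire income Y₁ on region II's market. -/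
/-! Because `p₂' < p₁` and `p₂ < p₁'`, each consumer's cheapest unit is sold in region II, so no
affordable bundle yields more than `Y₁/p₂'` (resp. `Y₂/p₂`) units. Below the line `ℓ₂` region II's
supply covers both demands, so the proposed profile attains these bounds. -/

open Filter

noncomputable section

theorem add_le_div_of_mul_add_mul_le_s12 {a b x y Y : ℝ} (ha : 0 ≤ a) (hy : 0 < y)
    (hyx : y ≤ x) (h : a * x + b * y ≤ Y) : a + b ≤ Y / y := by
  rw [le_div_iff₀ hy]
  nlinarith

section Payoffs

variable {Y1 Y2 q1 q2 p1 p2 ρ a b c d : ℝ}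

theorem P1_le_add : P1 q1 q2 a b c d ≤ a + b :=
  add_le_add (min_le_left _ _) (min_le_left _ _)

theorem P2_le_add : P2 q1 q2 a b c d ≤ c + d := by
  rw [add_comm c]
  exact add_le_add (min_le_left _ _) (min_le_left _ _)

theorem P1_le_div_of_S1 (hp : 0 < p2 + ρ) (hΔ : p2 + ρ ≤ p1) (h : S1 Y1 p1 p2 ρ a b) :
    P1 q1 q2 a b c d ≤ Y1 / (p2 + ρ) :=
  P1_le_add.trans (add_le_div_of_mul_add_mul_le_s12 h.1 hp hΔ h.2.2)

theorem P2_le_div_of_S2 (hp2 : 0 < p2) (hΔ : p2 ≤ p1 + ρ) (h : S2 Y2 p1 p2 ρ c d) :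
    P2 q1 q2 a b c d ≤ Y2 / p2 :=
  P2_le_add.trans (add_le_div_of_mul_add_mul_le_s12 h.1 hp2 hΔ h.2.2)

theorem P1_of_zero_of_le (hq1 : 0 ≤ q1) (hb : 0 ≤ b) (hbd : b ≤ q2 - d) :
    P1 q1 q2 0 b c d = b := by
  rw [P1, min_eq_left hq1, max_eq_right (hb.trans hbd), min_eq_left hbd, zero_add]

theorem P2_of_zero_of_le (hdq : d ≤ q2) : P2 q1 q2 a b 0 d = d := by
  rw [P2, min_eq_left hdq, min_eq_left (le_max_left _ _), add_zero]

theorem S1_zero_div (hY1 : 0 ≤ Y1) (hp : 0 < p2 + ρ) : S1 Y1 p1 p2 ρ 0 (Y1 / (p2 + ρ)) :=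
  ⟨le_rfl, div_nonneg hY1 hp.le, by rw [zero_mul, zero_add, div_mul_cancel₀ _ hp.ne']⟩

theorem S2_zero_div (hY2 : 0 ≤ Y2) (hp2 : 0 < p2) : S2 Y2 p1 p2 ρ 0 (Y2 / p2) :=
  ⟨le_rfl, div_nonneg hY2 hp2.le, by rw [zero_mul, zero_add, div_mul_cancel₀ _ hp2.ne']⟩

end Payoffs

theorem zoneI3_highgap_nash_general (Y1 Y2 q1 q2 ρ p1 p2 : ℝ)
    (hY1 : 0 < Y1) (hY2 : 0 < Y2) (hq1 : 0 < q1) (hρ : 0 < ρ)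
    (hp2 : 0 < p2)
    (hΔ : p2 + ρ < p1)
    (hl2 : Y1 / (p2 + ρ) + Y2 / p2 < q2) :
    NashEq Y1 Y2 q1 q2 p1 p2 ρ 0 (Y1 / (p2 + ρ)) 0 (Y2 / p2) := by
  have hp : 0 < p2 + ρ := by positivity
  have hb0 : 0 ≤ Y1 / (p2 + ρ) := by positivity
  have hd0 : 0 ≤ Y2 / p2 := by positivity
  refine ⟨S1_zero_div hY1.le hp, S2_zero_div hY2.le hp2, fun a b hab => ?_, fun c d hcd => ?_⟩
  · rw [P1_of_zero_of_le hq1.le hb0 (by linarith)]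
    exact P1_le_div_of_S1 hp hΔ.le hab
  · rw [P2_of_zero_of_le (by linarith)]
    exact P2_le_div_of_S2 hp2 (by linarith) hcd

/-- Proposition 3c (zone I-3, `Δp > ρ`): the quadruple `(0, Y₁/p₂', 0, Y₂/p₂)` is
a Nash equilibrium, in which consumer I spends the entire income on region II's
market. -/
theorem zoneI3_highgap_nash (Y1 Y2 q1 q2 ρ p1 p2 : ℝ)
    (hY1 : 0 < Y1) (hY2 : 0 < Y2) (hq1 : 0 < q1) (hq2 : 0 < q2) (hρ : 0 < ρ)
    (hp1 : 0 < p1) (hp2 : 0 < p2)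
    (hΔ : p2 + ρ < p1)
    (h1 : Y1 < p1 * q1) (h2 : Y2 < p2 * q2)
    (hl2 : Y1 / (p2 + ρ) + Y2 / p2 < q2) :
    NashEq Y1 Y2 q1 q2 p1 p2 ρ 0 (Y1 / (p2 + ρ)) 0 (Y2 / p2) :=
  zoneI3_highgap_nash_general Y1 Y2 q1 q2 ρ p1 p2 hY1 hY2 hq1 hρ hp2 hΔ hl2
end
end

section
/- (Zone II-2, case 2.1: degenerate ℓ₄-equilibrium) Let Y₁, q₁, ρ > 0 and B > 0, and define g(x) = (1/q₁)·(Y₁ + B·x/(x + ρ)) for x ≥ 0, and k = (1/(2·q₁))·(√((ρ·q₁ − Y₁ − B)² + 4·q₁·ρ·Y₁) − (ρ·q₁ − Y₁ − B)). Then: (i) k > 0 and g(k) = k; (ii) g is strictly increasing on [0, ∞); (iii) for every p₀ > k, the sequence defined by p_{t+1} = g(p_t) is strictly decreasing, satisfies p_t > k for all t, and converges to k as t → ∞. -/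
/-! Up to the positive factor `q₁ (x + ρ)`, `x − g x` is the quadratic
`q₁ x² + (ρ q₁ − Y₁ − B) x − ρ Y₁`, whose larger root is `kcrit`. Hence `g x < x` above
`kcrit`, while `g x > g kcrit = kcrit` there by monotonicity; so an orbit started above `kcrit`
decreases and stays above it. Its limit is a fixed point of the continuous map `g` in
`[kcrit, ∞)`, and the only one is `kcrit`. -/

open Filter

noncomputable section

/-- The downward price-adjustment map for `p₁` in zone II-2, with
`B = Y₂ − p_{2,0} q₂ > 0`. -/
def g (Y1 q1 ρ B x : ℝ) : ℝ := (Y1 + B * (x / (x + ρ))) / q1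

/-- The critical threshold `k` from Proposition 2 (zone II-2, case II,ii-2a). -/
def kcrit (Y1 q1 ρ B : ℝ) : ℝ :=
  (Real.sqrt ((ρ * q1 - Y1 - B) ^ 2 + 4 * q1 * ρ * Y1) - (ρ * q1 - Y1 - B)) / (2 * q1)

open Set Topology

section Recursion

variable {α : Type*} {f : α → α} {k : α} {p : ℕ → α}

theorem lt_of_recursion_of_mem_Ioo [Preorder α] (hf : ∀ x, k < x → f x ∈ Ioo k x)
    (hp0 : k < p 0) (hp : ∀ t, p (t + 1) = f (p t)) (t : ℕ) : k < p t := by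
  induction t with
  | zero => exact hp0
  | succ t ih => exact hp t ▸ (hf _ ih).1

theorem strictAnti_of_recursion_of_mem_Ioo [Preorder α] (hf : ∀ x, k < x → f x ∈ Ioo k x)
    (hp0 : k < p 0) (hp : ∀ t, p (t + 1) = f (p t)) : StrictAnti p :=
  strictAnti_nat_of_succ_lt fun t =>
    hp t ▸ (hf _ (lt_of_recursion_of_mem_Ioo hf hp0 hp t)).2

theorem tendsto_of_recursion_of_mem_Ioo [ConditionallyCompleteLinearOrder α]
    [TopologicalSpace α] [OrderTopology α] (hf : ∀ x, k < x → f x ∈ Ioo k x)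
    (hcont : ContinuousOn f (Ioi k)) (hp0 : k < p 0) (hp : ∀ t, p (t + 1) = f (p t)) :
    Tendsto p atTop (𝓝 k) := by
  have hk := lt_of_recursion_of_mem_Ioo hf hp0 hp
  have hlim : Tendsto p atTop (𝓝 (⨅ t, p t)) :=
    tendsto_atTop_ciInf (strictAnti_of_recursion_of_mem_Ioo hf hp0 hp).antitone
      ⟨k, forall_mem_range.2 fun t => (hk t).le⟩
  rcases (le_ciInf fun t => (hk t).le : k ≤ ⨅ t, p t).lt_or_eq with hkL | hkL
  · have hfix : f (⨅ t, p t) = ⨅ t, p t :=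
      tendsto_nhds_unique ((hcont.continuousAt (Ioi_mem_nhds hkL)).tendsto.comp hlim)
        (by simpa only [Function.comp_def, hp] using hlim.comp (tendsto_add_atTop_nat 1))
    exact absurd hfix (hf _ hkL).2.ne
  · rwa [← hkL] at hlim

end Recursion

section PriceAdjustment

variable {Y1 q1 ρ B x : ℝ}

theorem g_strictMonoOn (hq1 : 0 < q1) (hρ : 0 < ρ) (hB : 0 < B) :
    StrictMonoOn (g Y1 q1 ρ B) (Ioi (-ρ)) := by
  intro x hx y hy hxy
  have hx : 0 < x + ρ := neg_lt_iff_pos_add.1 hx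
  have hy : 0 < y + ρ := neg_lt_iff_pos_add.1 hy
  have hfrac : x / (x + ρ) < y / (y + ρ) := by
    rw [div_lt_div_iff₀ hx hy]
    nlinarith
  unfold g
  gcongr

theorem continuousOn_g (hq1 : q1 ≠ 0) : ContinuousOn (g Y1 q1 ρ B) (Ioi (-ρ)) := by
  intro x hx
  have hx : x + ρ ≠ 0 := (neg_lt_iff_pos_add.1 hx).ne'
  unfold g
  fun_prop (disch := assumption)

theorem g_sub_self (hq1 : q1 ≠ 0) (hx : x + ρ ≠ 0) :
    g Y1 q1 ρ B x - x =
      -(q1 * (x * x) + (ρ * q1 - Y1 - B) * x + -(ρ * Y1)) / (q1 * (x + ρ)) := by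
  unfold g
  field_simp
  ring

theorem kcrit_isRoot (hq1 : q1 ≠ 0) (hdisc : 0 ≤ (ρ * q1 - Y1 - B) ^ 2 + 4 * q1 * ρ * Y1) :
    q1 * (kcrit Y1 q1 ρ B * kcrit Y1 q1 ρ B) + (ρ * q1 - Y1 - B) * kcrit Y1 q1 ρ B
      + -(ρ * Y1) = 0 := by
  refine (quadratic_eq_zero_iff hq1 (s := √((ρ * q1 - Y1 - B) ^ 2 + 4 * q1 * ρ * Y1)) ?_ _).2
    (Or.inl ?_)
  · rw [discrim, Real.mul_self_sqrt hdisc]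
    ring
  · unfold kcrit
    ring

theorem kcrit_pos (hq1 : 0 < q1) (hρ : 0 < ρ) (hY1 : 0 < Y1) : 0 < kcrit Y1 q1 ρ B := by
  have : 0 < 4 * q1 * ρ * Y1 := by positivity
  exact div_pos (sub_pos.2 (Real.lt_sqrt_of_sq_lt (by linarith))) (by positivity)

theorem quadratic_pos_of_kcrit_lt (hq1 : 0 < q1)
    (hdisc : 0 ≤ (ρ * q1 - Y1 - B) ^ 2 + 4 * q1 * ρ * Y1) (hx : kcrit Y1 q1 ρ B < x) :
    0 < q1 * (x * x) + (ρ * q1 - Y1 - B) * x + -(ρ * Y1) := by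
  have hroot := kcrit_isRoot (B := B) hq1.ne' hdisc
  have hvertex : 2 * q1 * kcrit Y1 q1 ρ B + (ρ * q1 - Y1 - B) =
      √((ρ * q1 - Y1 - B) ^ 2 + 4 * q1 * ρ * Y1) := by
    unfold kcrit
    field_simp
    ring
  -- `Q x - Q k = (x - k) (q₁ (x + k) + ρ q₁ − Y₁ − B)`, and the second factor exceeds `√disc`.
  have hslope : 0 < q1 * (x + kcrit Y1 q1 ρ B) + (ρ * q1 - Y1 - B) := by
    nlinarith [Real.sqrt_nonneg ((ρ * q1 - Y1 - B) ^ 2 + 4 * q1 * ρ * Y1)]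
  nlinarith [mul_pos (sub_pos.2 hx) hslope]

variable (hq1 : 0 < q1) (hρ : 0 < ρ) (hY1 : 0 < Y1)
include hq1 hρ hY1

theorem g_kcrit : g Y1 q1 ρ B (kcrit Y1 q1 ρ B) = kcrit Y1 q1 ρ B := by
  have hk := kcrit_pos (B := B) hq1 hρ hY1
  have h := g_sub_self (Y1 := Y1) (B := B) hq1.ne' (x := kcrit Y1 q1 ρ B) (ρ := ρ) (by positivity)
  rwa [kcrit_isRoot hq1.ne' (by positivity), neg_zero, zero_div, sub_eq_zero] at h

theorem g_lt_self (hx : kcrit Y1 q1 ρ B < x) : g Y1 q1 ρ B x < x := by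
  have hxρ : 0 < x + ρ := by linarith [kcrit_pos (B := B) hq1 hρ hY1]
  rw [← sub_neg, g_sub_self hq1.ne' hxρ.ne', neg_div]
  exact neg_neg_of_pos (div_pos (quadratic_pos_of_kcrit_lt hq1 (by positivity) hx)
    (by positivity))

theorem kcrit_lt_g (hB : 0 < B) (hx : kcrit Y1 q1 ρ B < x) :
    kcrit Y1 q1 ρ B < g Y1 q1 ρ B x := by
  have hk := kcrit_pos (B := B) hq1 hρ hY1
  have hmem (y : ℝ) (hy : 0 ≤ y) : y ∈ Ioi (-ρ) := by simp only [mem_Ioi]; linarith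
  calc kcrit Y1 q1 ρ B = g Y1 q1 ρ B (kcrit Y1 q1 ρ B) := (g_kcrit hq1 hρ hY1).symm
    _ < g Y1 q1 ρ B x := g_strictMonoOn hq1 hρ hB (hmem _ hk.le) (hmem _ (hk.trans hx).le) hx

end PriceAdjustment

/-- Zone II-2, case 2.1 (degenerate ℓ₄-equilibrium): `k` is a positive fixed point
of `g`, `g` is strictly increasing on `[0, ∞)`, and every orbit of `g` started
above `k` decreases strictly, stays above `k`, and converges to `k`. -/
theorem degenerate_ell4_equilibrium (Y1 q1 ρ B : ℝ)
    (hY1 : 0 < Y1) (hq1 : 0 < q1) (hρ : 0 < ρ) (hB : 0 < B) :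
    0 < kcrit Y1 q1 ρ B ∧
    g Y1 q1 ρ B (kcrit Y1 q1 ρ B) = kcrit Y1 q1 ρ B ∧
    StrictMonoOn (g Y1 q1 ρ B) (Set.Ici 0) ∧
    (∀ p : ℕ → ℝ, kcrit Y1 q1 ρ B < p 0 → (∀ t, p (t + 1) = g Y1 q1 ρ B (p t)) →
      StrictAnti p ∧ (∀ t, kcrit Y1 q1 ρ B < p t) ∧
      Tendsto p atTop (nhds (kcrit Y1 q1 ρ B))) := by
  have hk := kcrit_pos (B := B) hq1 hρ hY1
  have hIoi : Ioi (kcrit Y1 q1 ρ B) ⊆ Ioi (-ρ) := Ioi_subset_Ioi (by linarith)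
  have hf (x : ℝ) (hx : kcrit Y1 q1 ρ B < x) : g Y1 q1 ρ B x ∈ Ioo (kcrit Y1 q1 ρ B) x :=
    ⟨kcrit_lt_g hq1 hρ hY1 hB hx, g_lt_self hq1 hρ hY1 hx⟩
  exact ⟨hk, g_kcrit hq1 hρ hY1,
    (g_strictMonoOn hq1 hρ hB).mono (Ici_subset_Ioi.2 (neg_neg_of_pos hρ)), fun p hp0 hp =>
    ⟨strictAnti_of_recursion_of_mem_Ioo hf hp0 hp, lt_of_recursion_of_mem_Ioo hf hp0 hp,
      tendsto_of_recursion_of_mem_Ioo hf ((continuousOn_g hq1.ne').mono hIoi) hp0 hp⟩⟩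
end
end
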